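/- arXiv:1305.0617 — 3 statements merged into one kernel-verified Lean document; each statement's English description precedes it below -/
import Mathlib

section
/- Let d ≥ 1 be an integer, let s ∈ (0,2], R > 0 and C₁ ≥ 0. Let g : ℝ^d → ℝ be measurable and suppose there exists a vector c ∈ ℝ^d such that |g(u) − g(0) − ⟨c, u⟩| ≤ C₁‖u‖^s for every u in the closed Euclidean ball B_R = {u ∈ ℝ^d : ‖u‖ ≤ R}. Then the constant M_{d,s} = (2π)^{−d/2} ∫_{ℝ^d} exp(−‖v‖²/2)‖v‖^s dv is finite, and for every a > 0, | (a/√(2π))^d ∫_{B_R} exp(−a²‖u‖²/2) (g(u) − g(0)) du | ≤ C₁ · M_{d,s} · a^{−s}. -/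
/-!
Write `g u - g 0 = (g u - g 0 - ⟪c, u⟫) + ⟪c, u⟫`. The Gaussian weight is even and the ball is
symmetric, so the linear part integrates to zero; the remainder is at most `C₁ ‖u‖ ^ s`, and
after enlarging the ball to the whole space the substitution `u = v / a` turns
`∫ exp (-a² ‖u‖² / 2) ‖u‖ ^ s du` into `a ^ (-d - s) ∫ exp (-‖v‖² / 2) ‖v‖ ^ s dv`. This moment is
finite because in polar coordinates it becomes the one-dimensional integral of
`r ^ (s + d - 1) exp (-r² / 2)`.
-/

open MeasureTheory Real Metric Module
open scoped RealInnerProductSpace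

theorem setIntegral_eq_zero_of_odd {G F : Type*} [MeasurableSpace G] [AddGroup G]
    [MeasurableNeg G] [NormedAddCommGroup F] [NormedSpace ℝ F] (μ : Measure G)
    [μ.IsNegInvariant] {S : Set G} (hS : MeasurableSet S) (hS_neg : -S = S) {f : G → F}
    (hf : ∀ x, f (-x) = -f x) :
    ∫ x in S, f x ∂μ = 0 := by
  have hind : ∀ x, S.indicator f (-x) = -S.indicator f x := by
    intro x
    by_cases hx : x ∈ S
    · have hx' : -x ∈ S := by rwa [← Set.mem_neg, hS_neg]
      simp [hx, hx', hf]
    · have hx' : -x ∉ S := by rwa [← Set.mem_neg, hS_neg]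
      simp [hx, hx']
  have hsymm := integral_neg_eq_self (S.indicator f) μ
  simp only [hind, integral_neg] at hsymm
  rw [neg_eq_iff_add_eq_zero, ← two_smul ℝ, smul_eq_zero] at hsymm
  rw [← integral_indicator hS]
  exact hsymm.resolve_left two_ne_zero

theorem integral_add_eq_of_integral_eq_zero {α F : Type*} [MeasurableSpace α]
    [NormedAddCommGroup F] [NormedSpace ℝ F] {μ : Measure α} (f : α → F) {h : α → F}
    (hh : Integrable h μ) (hh0 : ∫ x, h x ∂μ = 0) :
    ∫ x, f x + h x ∂μ = ∫ x, f x ∂μ := by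
  by_cases hf : Integrable f μ
  · rw [integral_add hf hh, hh0, add_zero]
  · rw [integral_undef hf, integral_undef]
    exact fun hfh => hf ((integrable_add_iff_integrable_left hh).mp hfh)

theorem norm_setIntegral_le_integral_of_norm_le {α F : Type*} [MeasurableSpace α]
    [NormedAddCommGroup F] [NormedSpace ℝ F] {μ : Measure α} {S : Set α} (hS : MeasurableSet S)
    {f : α → F} {φ : α → ℝ} (hφ : Integrable φ μ) (hφ_nonneg : ∀ x, 0 ≤ φ x)
    (hfφ : ∀ x ∈ S, ‖f x‖ ≤ φ x) :
    ‖∫ x in S, f x ∂μ‖ ≤ ∫ x, φ x ∂μ :=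
  (norm_integral_le_of_norm_le hφ.integrableOn ((ae_restrict_iff' hS).mpr (.of_forall hfφ))).trans
    (setIntegral_le_integral hφ (.of_forall hφ_nonneg))

theorem div_sqrt_pow {x : ℝ} (hx : 0 ≤ x) (a : ℝ) (n : ℕ) :
    (a / √x) ^ n = a ^ n * x ^ (-(n : ℝ) / 2) := by
  rw [div_pow, sqrt_eq_rpow, ← rpow_mul_natCast hx, div_eq_mul_inv, ← rpow_neg hx]
  ring_nf

section Gaussian

variable {E : Type*} [NormedAddCommGroup E] [NormedSpace ℝ E]

theorem exp_neg_sq_norm_smul_mul_rpow {a : ℝ} (ha : 0 ≤ a) (s : ℝ) (u : E) :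
    exp (-‖a • u‖ ^ 2 / 2) * ‖a • u‖ ^ s = a ^ s * (exp (-(a ^ 2) * ‖u‖ ^ 2 / 2) * ‖u‖ ^ s) := by
  rw [norm_smul, norm_of_nonneg ha, mul_rpow ha (norm_nonneg u), mul_pow]
  ring_nf

variable [FiniteDimensional ℝ E] [MeasurableSpace E] [BorelSpace E] (μ : Measure E)
  [μ.IsAddHaarMeasure]

theorem integrable_exp_neg_mul_sq_norm_mul_rpow_norm [Nontrivial E] {b : ℝ} (hb : 0 < b)
    {s : ℝ} (hs : -(finrank ℝ E : ℝ) < s) :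
    Integrable (fun v : E => exp (-b * ‖v‖ ^ 2 / 2) * ‖v‖ ^ s) μ := by
  rw [integrable_fun_norm_addHaar μ (f := fun y => exp (-b * y ^ 2 / 2) * y ^ s)]
  have hexp : -1 < s + (finrank ℝ E - 1 : ℕ) := by
    rw [Nat.cast_pred finrank_pos]; linarith
  refine (integrableOn_rpow_mul_exp_neg_mul_sq (half_pos hb) hexp).congr_fun
    (fun y (hy : 0 < y) => ?_) measurableSet_Ioi
  dsimp only
  rw [rpow_add hy, rpow_natCast, smul_eq_mul]
  ring_nf

theorem pow_finrank_mul_integral_exp_neg_mul_sq_norm_mul_rpow {a : ℝ} (ha : 0 < a) (s : ℝ) :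
    a ^ finrank ℝ E * ∫ u, exp (-(a ^ 2) * ‖u‖ ^ 2 / 2) * ‖u‖ ^ s ∂μ =
      a ^ (-s) * ∫ v, exp (-‖v‖ ^ 2 / 2) * ‖v‖ ^ s ∂μ := by
  have hscale := Measure.integral_comp_smul_of_nonneg μ (fun v => exp (-‖v‖ ^ 2 / 2) * ‖v‖ ^ s) a
    (hR := ha.le)
  simp only [exp_neg_sq_norm_smul_mul_rpow ha.le, integral_const_mul, smul_eq_mul] at hscale
  rw [eq_inv_mul_iff_mul_eq₀ (by positivity)] at hscale
  rw [← hscale, rpow_neg ha.le]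
  field_simp

end Gaussian

section Ball

variable {E : Type*} [NormedAddCommGroup E] [InnerProductSpace ℝ E] [ProperSpace E]
  [MeasurableSpace E] [BorelSpace E] {μ : Measure E} [IsFiniteMeasureOnCompacts μ]
  [μ.IsNegInvariant]

theorem abs_setIntegral_closedBall_mul_sub_le {w g : E → ℝ} (hw : Continuous w)
    (hw_even : ∀ u, w (-u) = w u) (hw_nonneg : ∀ u, 0 ≤ w u) {s C₁ R : ℝ} (hC₁ : 0 ≤ C₁)
    (hmoment : Integrable (fun u => w u * ‖u‖ ^ s) μ) (c : E)
    (happrox : ∀ u, ‖u‖ ≤ R → |g u - g 0 - ⟪c, u⟫| ≤ C₁ * ‖u‖ ^ s) :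
    |∫ u in closedBall 0 R, w u * (g u - g 0) ∂μ| ≤ C₁ * ∫ u, w u * ‖u‖ ^ s ∂μ := by
  have hlinear_int : IntegrableOn (fun u => w u * ⟪c, u⟫) (closedBall 0 R) μ :=
    (by fun_prop : Continuous fun u => w u * ⟪c, u⟫).continuousOn.integrableOn_compact
      (isCompact_closedBall 0 R)
  have hlinear_zero : ∫ u in closedBall 0 R, w u * ⟪c, u⟫ ∂μ = 0 :=
    setIntegral_eq_zero_of_odd μ measurableSet_closedBall (by simp) fun u => by
      rw [hw_even, inner_neg_right, mul_neg]
  have hsplit : ∫ u in closedBall 0 R, w u * (g u - g 0) ∂μ =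
      ∫ u in closedBall 0 R, w u * (g u - g 0 - ⟪c, u⟫) ∂μ := by
    rw [← integral_add_eq_of_integral_eq_zero (fun u => w u * (g u - g 0 - ⟪c, u⟫)) hlinear_int
      hlinear_zero]
    simp only [← mul_add, sub_add_cancel]
  rw [hsplit, ← Real.norm_eq_abs, ← integral_const_mul]
  refine norm_setIntegral_le_integral_of_norm_le measurableSet_closedBall
    (hmoment.const_mul C₁) (fun u => by have := hw_nonneg u; positivity) fun u hu => ?_
  rw [norm_mul, norm_of_nonneg (hw_nonneg u), Real.norm_eq_abs, mul_left_comm]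
  exact mul_le_mul_of_nonneg_left (happrox u (mem_closedBall_zero_iff.mp hu)) (hw_nonneg u)

end Ball

theorem gaussian_convolution_error_general
    (d : ℕ) (hd : 1 ≤ d) (s : ℝ) (hs0 : 0 < s)
    (R : ℝ) (C₁ : ℝ) (hC₁ : 0 ≤ C₁)
    (g : EuclideanSpace ℝ (Fin d) → ℝ)
    (c : EuclideanSpace ℝ (Fin d))
    (happrox : ∀ u : EuclideanSpace ℝ (Fin d), ‖u‖ ≤ R →
      |g u - g 0 - ⟪c, u⟫| ≤ C₁ * ‖u‖ ^ s) :
    Integrable (fun v : EuclideanSpace ℝ (Fin d) =>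
      Real.exp (-‖v‖ ^ 2 / 2) * ‖v‖ ^ s) ∧
    ∀ a : ℝ, 0 < a →
      |(a / Real.sqrt (2 * Real.pi)) ^ d *
          ∫ u in {u : EuclideanSpace ℝ (Fin d) | ‖u‖ ≤ R},
            Real.exp (-(a ^ 2) * ‖u‖ ^ 2 / 2) * (g u - g 0)| ≤
        C₁ * ((2 * Real.pi) ^ (-(d : ℝ) / 2) *
          ∫ v : EuclideanSpace ℝ (Fin d), Real.exp (-‖v‖ ^ 2 / 2) * ‖v‖ ^ s) *
          a ^ (-s) := by
  have hdim : finrank ℝ (EuclideanSpace ℝ (Fin d)) = d := finrank_euclideanSpace_fin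
  have : Nontrivial (EuclideanSpace ℝ (Fin d)) :=
    Module.nontrivial_of_finrank_pos (R := ℝ) (by omega)
  have hs : -(finrank ℝ (EuclideanSpace ℝ (Fin d)) : ℝ) < s := by
    rw [hdim]; linarith [(d.cast_nonneg : (0 : ℝ) ≤ d)]
  refine ⟨?_, fun a ha => ?_⟩
  · convert integrable_exp_neg_mul_sq_norm_mul_rpow_norm volume one_pos hs using 4
    ring
  have hball : {u : EuclideanSpace ℝ (Fin d) | ‖u‖ ≤ R} = closedBall 0 R := by
    ext; simp
  have hbound := abs_setIntegral_closedBall_mul_sub_le (by fun_prop) (fun u => by simp)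
    (fun u => (exp_pos _).le) hC₁
    (integrable_exp_neg_mul_sq_norm_mul_rpow_norm volume (pow_pos ha 2) hs) c happrox
  have hscale := pow_finrank_mul_integral_exp_neg_mul_sq_norm_mul_rpow
    (volume : Measure (EuclideanSpace ℝ (Fin d))) ha s
  rw [hdim] at hscale
  rw [hball, abs_mul, div_sqrt_pow (by positivity), abs_of_nonneg (by positivity)]
  calc _ ≤ a ^ d * (2 * π) ^ (-(d : ℝ) / 2) *
        (C₁ * ∫ u, exp (-(a ^ 2) * ‖u‖ ^ 2 / 2) * ‖u‖ ^ s) := by gcongr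
    _ = _ := by linear_combination C₁ * (2 * π) ^ (-(d : ℝ) / 2) * hscale

/-- Convolution-error estimate (the `T₁` term): if `g` agrees with an affine function up to
`C₁ ‖u‖^s` on the ball of radius `R`, then the Gaussian smoothing of `g - g 0` over that
ball is of order `a^{-s}`, with constant `C₁ M_{d,s}` where
`M_{d,s} = (2π)^{-d/2} ∫ exp(-‖v‖²/2) ‖v‖^s dv` is finite. -/
theorem gaussian_convolution_error
    (d : ℕ) (hd : 1 ≤ d) (s : ℝ) (hs0 : 0 < s) (hs2 : s ≤ 2)
    (R : ℝ) (hR : 0 < R) (C₁ : ℝ) (hC₁ : 0 ≤ C₁)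
    (g : EuclideanSpace ℝ (Fin d) → ℝ) (hg : Measurable g)
    (c : EuclideanSpace ℝ (Fin d))
    (happrox : ∀ u : EuclideanSpace ℝ (Fin d), ‖u‖ ≤ R →
      |g u - g 0 - ⟪c, u⟫| ≤ C₁ * ‖u‖ ^ s) :
    Integrable (fun v : EuclideanSpace ℝ (Fin d) =>
      Real.exp (-‖v‖ ^ 2 / 2) * ‖v‖ ^ s) ∧
    ∀ a : ℝ, 0 < a →
      |(a / Real.sqrt (2 * Real.pi)) ^ d *
          ∫ u in {u : EuclideanSpace ℝ (Fin d) | ‖u‖ ≤ R},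
            Real.exp (-(a ^ 2) * ‖u‖ ^ 2 / 2) * (g u - g 0)| ≤
        C₁ * ((2 * Real.pi) ^ (-(d : ℝ) / 2) *
          ∫ v : EuclideanSpace ℝ (Fin d), Real.exp (-‖v‖ ^ 2 / 2) * ‖v‖ ^ s) *
          a ^ (-s) :=
  gaussian_convolution_error_general d hd s hs0 R C₁ hC₁ g c happrox
end

section
/- Let d ≥ 1 be an integer and C_p > 0. Let B be a measurable subset of {u ∈ ℝ^d : ‖u‖² ≤ 1/(2C_p)} and let Q : ℝ^d → ℝ be measurable with |Q(u) − ‖u‖²| ≤ C_p‖u‖⁴ for all u ∈ B. Then there exists a constant C₆ > 0 depending only on d and C_p such that for every a > 0, (a/√(2π))^d ∫_B | exp(−a²Q(u)/2) − exp(−a²‖u‖²/2) | du ≤ C₆ · a^{−2}. -/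
/-!
On `B` we have `Cp ‖u‖⁴ ≤ ‖u‖² / 2`, hence `Q u ≥ ‖u‖² / 2`, so both exponents
are at most `-a² ‖u‖² / 4` and the mean value bound gives a difference of at most
`(a² Cp / 2) ‖u‖⁴ exp (-a² ‖u‖² / 4) ≤ 64 Cp a⁻² exp (-a² ‖u‖² / 8)`.
The normalized integral of this Gaussian over all of `ℝ^d` is `64 · 2^d · Cp · a⁻²`.
-/

open MeasureTheory Real

theorem Real.abs_exp_sub_exp_le_exp_max_mul (x y : ℝ) :
    |exp x - exp y| ≤ exp (max x y) * |x - y| := by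
  wlog hyx : y ≤ x generalizing x y
  · simpa only [abs_sub_comm, max_comm] using this y x (le_of_not_ge hyx)
  rw [abs_of_nonneg (sub_nonneg.2 (exp_le_exp.2 hyx)), abs_of_nonneg (sub_nonneg.2 hyx),
    max_eq_left hyx]
  have hsplit : exp y = exp x * exp (y - x) := by rw [← exp_add, add_sub_cancel]
  nlinarith [add_one_le_exp (y - x), exp_pos x]

theorem Real.mul_sq_mul_exp_neg_le {A r : ℝ} (hA : 0 < A) (hr : 0 ≤ r) :
    A * r ^ 2 * exp (-(A / 4) * r) ≤ 128 / A * exp (-(A / 8) * r) := by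
  have hpoly : (A * r) ^ 2 * exp (-(A / 8) * r) ≤ 128 := by
    have hfact := pow_div_factorial_le_exp (A / 8 * r) (by positivity) 2
    have hinv : exp (A / 8 * r) * exp (-(A / 8) * r) = 1 := by rw [← exp_add]; simp
    norm_num [Nat.factorial] at hfact
    nlinarith [exp_pos (-(A / 8) * r)]
  have hsplit : exp (-(A / 4) * r) = exp (-(A / 8) * r) * exp (-(A / 8) * r) := by
    rw [← exp_add]; ring_nf
  calc A * r ^ 2 * exp (-(A / 4) * r)
      = (A * r) ^ 2 * exp (-(A / 8) * r) / A * exp (-(A / 8) * r) := by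
        rw [hsplit]; field_simp
    _ ≤ 128 / A * exp (-(A / 8) * r) := by gcongr

theorem Real.abs_exp_sub_exp_le_mul_exp_neg_of_abs_sub_le {A c q r : ℝ} (hA : 0 < A)
    (hc : 0 ≤ c) (hr : 0 ≤ r) (hcr : c * r ≤ 1 / 2) (hq : |q - r| ≤ c * r ^ 2) :
    |exp (-A * q / 2) - exp (-A * r / 2)| ≤ 64 * c / A * exp (-(A / 8) * r) := by
  have hdiff : |-A * q / 2 - -A * r / 2| ≤ A * c * r ^ 2 / 2 := by
    rw [show -A * q / 2 - -A * r / 2 = -(A / 2) * (q - r) by ring, abs_mul, abs_neg,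
      abs_of_pos (half_pos hA)]
    nlinarith
  have hmax : max (-A * q / 2) (-A * r / 2) ≤ -(A / 4) * r := by
    have hq_lower : r / 2 ≤ q := by nlinarith [(abs_le.1 hq).1]
    exact max_le (by nlinarith) (by nlinarith)
  calc |exp (-A * q / 2) - exp (-A * r / 2)|
      ≤ exp (max (-A * q / 2) (-A * r / 2)) * |-A * q / 2 - -A * r / 2| :=
        abs_exp_sub_exp_le_exp_max_mul _ _
    _ ≤ exp (-(A / 4) * r) * (A * c * r ^ 2 / 2) := by gcongr
    _ = c / 2 * (A * r ^ 2 * exp (-(A / 4) * r)) := by ring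
    _ ≤ c / 2 * (128 / A * exp (-(A / 8) * r)) :=
        mul_le_mul_of_nonneg_left (mul_sq_mul_exp_neg_le hA hr) (by positivity)
    _ = 64 * c / A * exp (-(A / 8) * r) := by ring

section InnerProductSpace

variable {V : Type*} [NormedAddCommGroup V] [InnerProductSpace ℝ V] [FiniteDimensional ℝ V]
  [MeasurableSpace V] [BorelSpace V]

theorem integrable_exp_neg_mul_sq_norm {b : ℝ} (hb : 0 < b) :
    Integrable (fun v : V ↦ exp (-b * ‖v‖ ^ 2)) := by
  refine Integrable.of_integral_ne_zero ?_
  rw [GaussianFourier.integral_rexp_neg_mul_sq_norm hb]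
  positivity

theorem setIntegral_le_of_le_mul_exp_neg_mul_sq_norm {f : V → ℝ} {s : Set V} {K b : ℝ}
    (hs : MeasurableSet s) (hK : 0 ≤ K) (hb : 0 < b) (hf_nonneg : ∀ v, 0 ≤ f v)
    (hf : ∀ v ∈ s, f v ≤ K * exp (-b * ‖v‖ ^ 2)) :
    ∫ v in s, f v ≤ K * (π / b) ^ (Module.finrank ℝ V / 2 : ℝ) := by
  have hgauss := (integrable_exp_neg_mul_sq_norm (V := V) hb).const_mul K
  calc ∫ v in s, f v ≤ ∫ v in s, K * exp (-b * ‖v‖ ^ 2) :=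
        integral_mono_of_nonneg (ae_of_all _ fun v ↦ hf_nonneg v) hgauss.integrableOn
          ((ae_restrict_iff' hs).2 (ae_of_all _ hf))
    _ ≤ ∫ v, K * exp (-b * ‖v‖ ^ 2) :=
        setIntegral_le_integral hgauss (ae_of_all _ fun v ↦ by positivity)
    _ = K * (π / b) ^ (Module.finrank ℝ V / 2 : ℝ) := by
        rw [integral_const_mul, GaussianFourier.integral_rexp_neg_mul_sq_norm hb]

end InnerProductSpace

theorem div_sqrt_two_mul_pi_pow_mul_rpow_eq_two_pow {a : ℝ} (ha : 0 < a) (d : ℕ) :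
    (a / √(2 * π)) ^ d * (π / (a ^ 2 / 8)) ^ (d / 2 : ℝ) = 2 ^ d := by
  have hs : 0 < √(2 * π) := by positivity
  have hsq : π / (a ^ 2 / 8) = (2 * √(2 * π) / a) ^ 2 := by
    rw [div_pow, mul_pow, sq_sqrt (by positivity)]
    field_simp
    ring
  rw [hsq, ← rpow_natCast _ 2, ← rpow_mul (by positivity),
    show ((2 : ℕ) : ℝ) * (d / 2) = d by push_cast; ring, rpow_natCast, ← mul_pow]
  congr 1
  field_simp

theorem non_flat_error_bound_general (d : ℕ) (Cp : ℝ) (hCp : 0 < Cp) :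
    ∃ C₆ : ℝ, 0 < C₆ ∧
      ∀ (B : Set (EuclideanSpace ℝ (Fin d))), MeasurableSet B →
        B ⊆ {u : EuclideanSpace ℝ (Fin d) | ‖u‖ ^ 2 ≤ 1 / (2 * Cp)} →
      ∀ (Q : EuclideanSpace ℝ (Fin d) → ℝ), Measurable Q →
        (∀ u ∈ B, |Q u - ‖u‖ ^ 2| ≤ Cp * ‖u‖ ^ 4) →
      ∀ a : ℝ, 0 < a →
        (a / Real.sqrt (2 * Real.pi)) ^ d *
            ∫ u in B,
              |Real.exp (-(a ^ 2) * Q u / 2) - Real.exp (-(a ^ 2) * ‖u‖ ^ 2 / 2)| ≤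
          C₆ * a ^ (-(2 : ℝ)) := by
  refine ⟨64 * 2 ^ d * Cp, by positivity, fun B hB hB_ball Q _ hQ a ha ↦ ?_⟩
  have hkernel : ∀ u ∈ B, |exp (-(a ^ 2) * Q u / 2) - exp (-(a ^ 2) * ‖u‖ ^ 2 / 2)| ≤
      64 * Cp / a ^ 2 * exp (-(a ^ 2 / 8) * ‖u‖ ^ 2) := fun u hu ↦ by
    have hu_ball : ‖u‖ ^ 2 ≤ 1 / (2 * Cp) := hB_ball hu
    refine abs_exp_sub_exp_le_mul_exp_neg_of_abs_sub_le (by positivity) hCp.le (by positivity)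
      ?_ ?_
    · rw [le_div_iff₀ (by positivity)] at hu_ball
      linarith
    · simpa only [← pow_mul] using hQ u hu
  have hintegral := setIntegral_le_of_le_mul_exp_neg_mul_sq_norm hB (by positivity)
    (by positivity) (fun _ ↦ abs_nonneg _) hkernel
  rw [finrank_euclideanSpace_fin] at hintegral
  calc (a / √(2 * π)) ^ d *
        ∫ u in B, |exp (-(a ^ 2) * Q u / 2) - exp (-(a ^ 2) * ‖u‖ ^ 2 / 2)|
      ≤ (a / √(2 * π)) ^ d * (64 * Cp / a ^ 2 * (π / (a ^ 2 / 8)) ^ (d / 2 : ℝ)) := by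
        gcongr
    _ = 64 * 2 ^ d * Cp * a ^ (-(2 : ℝ)) := by
        rw [mul_left_comm, div_sqrt_two_mul_pi_pow_mul_rpow_eq_two_pow ha, rpow_neg ha.le,
          rpow_two]
        ring

/-- The `T₃` estimate: if `Q(u)` deviates from `‖u‖²` by at most `C_p ‖u‖⁴` on a set `B`
contained in `{‖u‖² ≤ 1/(2 C_p)}`, then the difference of the two Gaussian kernels,
integrated over `B` and normalized, is of order `a^{-2}`, with a constant depending only
on `d` and `C_p`. -/
theorem non_flat_error_bound (d : ℕ) (hd : 1 ≤ d) (Cp : ℝ) (hCp : 0 < Cp) :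
    ∃ C₆ : ℝ, 0 < C₆ ∧
      ∀ (B : Set (EuclideanSpace ℝ (Fin d))), MeasurableSet B →
        B ⊆ {u : EuclideanSpace ℝ (Fin d) | ‖u‖ ^ 2 ≤ 1 / (2 * Cp)} →
      ∀ (Q : EuclideanSpace ℝ (Fin d) → ℝ), Measurable Q →
        (∀ u ∈ B, |Q u - ‖u‖ ^ 2| ≤ Cp * ‖u‖ ^ 4) →
      ∀ a : ℝ, 0 < a →
        (a / Real.sqrt (2 * Real.pi)) ^ d *
            ∫ u in B,
              |Real.exp (-(a ^ 2) * Q u / 2) - Real.exp (-(a ^ 2) * ‖u‖ ^ 2 / 2)| ≤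
          C₆ * a ^ (-(2 : ℝ)) :=
  non_flat_error_bound_general d Cp hCp
end

section
/- For every A > 0 and σ > 0 there exists a constant C > 0, depending only on A and σ, with the following property. Let (S, 𝒮, G) be a probability space, let g : S → ℝ be measurable with |g(x)| ≤ 2A for all x ∈ S and ‖g‖₂² := ∫_S g² dG > 0. Let X₁, …, X_m be independent S-valued random variables with law G, and let ε₁, …, ε_m be independent real Gaussian random variables with mean 0 and variance σ², with the family (ε_i) independent of the family (X_i). Then P( (1/4)·‖g‖₂² + (1/m)Σ_{i=1}^m ε_i² ≤ (1/m)Σ_{i=1}^m (g(X_i) − ε_i)² ≤ 2·‖g‖₂² + (1/m)Σ_{i=1}^m ε_i² ) ≥ 1 − 8·exp(−C·m·‖g‖₂²). -/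
/-!
With `Q = ∑ g(Xᵢ)²` and `T = ∑ g(Xᵢ) εᵢ`, the sum `∑ (g(Xᵢ) - εᵢ)²` equals `Q - 2T + ∑ εᵢ²`, so
the sandwich holds as soon as `m‖g‖²/2 < Q < 7m‖g‖²/4` and `|T| < m‖g‖²/8`. Each of these
fails with probability `exp(-c m ‖g‖²)` by a Chernoff bound. For `Q`, convexity of `exp` on
`[0, 4A²]` bounds `E exp(s g(X)²)` by `exp((e^{4A²s} - 1) ‖g‖² / (4A²))`, which is linear in
`‖g‖²` (Hoeffding's bound would only give `exp(-c m ‖g‖⁴)`). For `T`, conditionally on the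
sample `T` is a centred Gaussian of variance `σ² Q`, so the moment generating function of `T`
at `t` is that of `Q` at `σ²t²/2`.
-/

open MeasureTheory ProbabilityTheory Real
open scoped ENNReal NNReal

lemma exp_mul_le_one_add_chord {s y B : ℝ} (hB : 0 < B) (hy0 : 0 ≤ y) (hyB : y ≤ B) :
    exp (s * y) ≤ 1 + (exp (s * B) - 1) / B * y := by
  have hyB' : y / B ≤ 1 := (div_le_one hB).2 hyB
  have h := convexOn_exp.2 (Set.mem_univ 0) (Set.mem_univ (s * B)) (by linarith)
    (div_nonneg hy0 hB.le) (sub_add_cancel 1 (y / B))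
  have hsy : y / B * (s * B) = s * y := by field_simp
  simp only [smul_eq_mul, mul_zero, zero_add, exp_zero, mul_one, hsy] at h
  calc exp (s * y) ≤ 1 - y / B + y / B * exp (s * B) := h
    _ = 1 + (exp (s * B) - 1) / B * y := by ring

/-- A Chernoff bound in `ℝ≥0∞`, free of the integrability hypothesis of
`measure_ge_le_exp_mul_mgf`. -/
lemma measure_ge_le_of_lintegral_exp_le {α : Type*} [MeasurableSpace α] {μ : Measure α}
    {Y : α → ℝ} (hY : AEMeasurable Y μ) {t K : ℝ} (ht : 0 ≤ t) (a : ℝ)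
    (hmgf : ∫⁻ x, ENNReal.ofReal (exp (t * Y x)) ∂μ ≤ ENNReal.ofReal (exp K)) :
    μ {x | a ≤ Y x} ≤ ENNReal.ofReal (exp (K - t * a)) := by
  have hpos : ENNReal.ofReal (exp (t * a)) ≠ 0 := by simpa using exp_pos (t * a)
  calc μ {x | a ≤ Y x}
      ≤ μ {x | ENNReal.ofReal (exp (t * a)) ≤ ENNReal.ofReal (exp (t * Y x))} :=
        measure_mono fun x hx => ENNReal.ofReal_le_ofReal (exp_le_exp.2 (by gcongr; exact hx))
    _ ≤ (∫⁻ x, ENNReal.ofReal (exp (t * Y x)) ∂μ) / ENNReal.ofReal (exp (t * a)) :=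
        meas_ge_le_lintegral_div (by fun_prop) hpos ENNReal.ofReal_ne_top
    _ ≤ ENNReal.ofReal (exp K) / ENNReal.ofReal (exp (t * a)) := by gcongr
    _ = ENNReal.ofReal (exp (K - t * a)) := by
        rw [← ENNReal.ofReal_div_of_pos (exp_pos _), exp_sub]

lemma lintegral_exp_mul_gaussianReal (μ : ℝ) (v : ℝ≥0) (c : ℝ) :
    ∫⁻ x, ENNReal.ofReal (exp (c * x)) ∂gaussianReal μ v
      = ENNReal.ofReal (exp (μ * c + v * c ^ 2 / 2)) := by
  rw [← ofReal_integral_eq_lintegral_ofReal (integrable_exp_mul_gaussianReal c)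
    (Filter.Eventually.of_forall fun x => (exp_pos _).le)]
  congr 1
  exact congrFun mgf_fun_id_gaussianReal c

lemma lintegral_exp_sum_of_iIndepFun {Ω ι : Type*} [MeasurableSpace Ω] [Fintype ι]
    {P : Measure Ω} {Y : ι → Ω → ℝ} (hY : ∀ i, Measurable (Y i)) (hind : iIndepFun Y P) :
    ∫⁻ ω, ENNReal.ofReal (exp (∑ i, Y i ω)) ∂P = ∏ i, ∫⁻ ω, ENNReal.ofReal (exp (Y i ω)) ∂P := by
  simp_rw [exp_sum, ENNReal.ofReal_prod_of_nonneg fun i _ => (exp_pos _).le]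
  exact lintegral_prod_eq_prod_lintegral_of_indepFun _ _
    (hind.comp (fun _ y => ENNReal.ofReal (exp y)) fun _ => by fun_prop) fun i => by fun_prop

lemma lintegral_exp_mul_le_of_bounded {S : Type*} [MeasurableSpace S] {G : Measure S}
    [IsProbabilityMeasure G] {f : S → ℝ} (hf : Measurable f) {B : ℝ} (hB : 0 < B)
    (hf0 : ∀ x, 0 ≤ f x) (hfB : ∀ x, f x ≤ B) (s : ℝ) :
    ∫⁻ x, ENNReal.ofReal (exp (s * f x)) ∂G
      ≤ ENNReal.ofReal (exp ((exp (s * B) - 1) / B * ∫ x, f x ∂G)) := by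
  set c := (exp (s * B) - 1) / B
  have hfi : Integrable f G :=
    Integrable.of_bound hf.aestronglyMeasurable B
      (Filter.Eventually.of_forall fun x => by rw [norm_of_nonneg (hf0 x)]; exact hfB x)
  have hchord : ∀ x, exp (s * f x) ≤ 1 + c * f x := fun x =>
    exp_mul_le_one_add_chord hB (hf0 x) (hfB x)
  calc ∫⁻ x, ENNReal.ofReal (exp (s * f x)) ∂G
      ≤ ∫⁻ x, ENNReal.ofReal (1 + c * f x) ∂G :=
        lintegral_mono fun x => ENNReal.ofReal_le_ofReal (hchord x)
    _ = ENNReal.ofReal (1 + c * ∫ x, f x ∂G) := by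
        have hint : Integrable (fun x => 1 + c * f x) G :=
          (integrable_const 1).add (hfi.const_mul c)
        rw [← ofReal_integral_eq_lintegral_ofReal hint
          (Filter.Eventually.of_forall fun x => (exp_pos _).le.trans (hchord x)),
          integral_add (integrable_const 1) (hfi.const_mul c), integral_const_mul]
        simp
    _ ≤ ENNReal.ofReal (exp (c * ∫ x, f x ∂G)) := by
        gcongr
        linarith [add_one_le_exp (c * ∫ x, f x ∂G)]

lemma sum_sq_sub_sandwich_of_bounds {ι : Type*} [Fintype ι] {n v : ℝ} (hn : 0 < n)
    (a e : ι → ℝ) (hlow : n * v / 2 < ∑ i, a i ^ 2) (hup : ∑ i, a i ^ 2 < 7 * n * v / 4)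
    (hcross : |∑ i, a i * e i| < n * v / 8) :
    1 / 4 * v + 1 / n * ∑ i, e i ^ 2 ≤ 1 / n * ∑ i, (a i - e i) ^ 2 ∧
      1 / n * ∑ i, (a i - e i) ^ 2 ≤ 2 * v + 1 / n * ∑ i, e i ^ 2 := by
  have hexpand : ∑ i, (a i - e i) ^ 2 = ∑ i, a i ^ 2 - 2 * ∑ i, a i * e i + ∑ i, e i ^ 2 := by
    simp only [sub_sq, Finset.sum_add_distrib, Finset.sum_sub_distrib, Finset.mul_sum, mul_assoc]
  obtain ⟨hcross₁, hcross₂⟩ := abs_lt.1 hcross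
  rw [hexpand]
  constructor
  · rw [← sub_nonneg]
    have : 1 / n * (∑ i, a i ^ 2 - 2 * ∑ i, a i * e i + ∑ i, e i ^ 2) -
        (1 / 4 * v + 1 / n * ∑ i, e i ^ 2)
        = 1 / n * (∑ i, a i ^ 2 - 2 * ∑ i, a i * e i - n * v / 4) := by
      field_simp; ring
    rw [this]; exact mul_nonneg (by positivity) (by linarith)
  · rw [← sub_nonneg]
    have : 2 * v + 1 / n * ∑ i, e i ^ 2 - 1 / n * (∑ i, a i ^ 2 - 2 * ∑ i, a i * e i + ∑ i, e i ^ 2)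
        = 1 / n * (2 * n * v - ∑ i, a i ^ 2 + 2 * ∑ i, a i * e i) := by
      field_simp; ring
    rw [this]; exact mul_nonneg (by positivity) (by linarith)

section IIDSample

variable {Ω S ι : Type*} [MeasurableSpace Ω] [MeasurableSpace S] [Fintype ι]
  {P : Measure Ω} {G : Measure S} [IsProbabilityMeasure G] {X : ι → Ω → S}
  {f : S → ℝ} {B : ℝ} {ε : ι → Ω → ℝ} {σ K : ℝ} {g : S → ℝ}

lemma lintegral_exp_mul_sum_le_of_bounded (hX : ∀ i, Measurable (X i)) (hind : iIndepFun X P)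
    (hlaw : ∀ i, P.map (X i) = G) (hf : Measurable f) (hB : 0 < B)
    (hf0 : ∀ x, 0 ≤ f x) (hfB : ∀ x, f x ≤ B) (s : ℝ) :
    ∫⁻ ω, ENNReal.ofReal (exp (s * ∑ i, f (X i ω))) ∂P
      ≤ ENNReal.ofReal (exp (Fintype.card ι * ((exp (s * B) - 1) / B * ∫ x, f x ∂G))) := by
  have hcomp : ∀ i, ∫⁻ ω, ENNReal.ofReal (exp (s * f (X i ω))) ∂P
      = ∫⁻ x, ENNReal.ofReal (exp (s * f x)) ∂G := fun i => by
    rw [← hlaw i, lintegral_map (by fun_prop) (hX i)]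
  calc ∫⁻ ω, ENNReal.ofReal (exp (s * ∑ i, f (X i ω))) ∂P
      = ∏ i, ∫⁻ ω, ENNReal.ofReal (exp (s * f (X i ω))) ∂P := by
        simp_rw [Finset.mul_sum]
        exact lintegral_exp_sum_of_iIndepFun (fun i => by fun_prop)
          (hind.comp (fun _ x => s * f x) fun _ => by fun_prop)
    _ ≤ ∏ _i : ι, ENNReal.ofReal (exp ((exp (s * B) - 1) / B * ∫ x, f x ∂G)) :=
        Finset.prod_le_prod' fun i _ => (hcomp i).trans_le
          (lintegral_exp_mul_le_of_bounded hf hB hf0 hfB s)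
    _ = _ := by
        rw [Finset.prod_const, Finset.card_univ, ← ENNReal.ofReal_pow (exp_pos _).le,
          ← exp_nat_mul]

lemma lintegral_exp_mul_sum_mul_gaussian [IsProbabilityMeasure P] (hX : ∀ i, Measurable (X i))
    (hε : ∀ i, Measurable (ε i)) (hεind : iIndepFun ε P) {v : ℝ≥0}
    (hεlaw : ∀ i, P.map (ε i) = gaussianReal 0 v)
    (hXε : IndepFun (fun ω i => X i ω) (fun ω i => ε i ω) P) {h : S → ℝ} (hh : Measurable h)
    (t : ℝ) :
    ∫⁻ ω, ENNReal.ofReal (exp (t * ∑ i, h (X i ω) * ε i ω)) ∂P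
      = ∫⁻ ω, ENNReal.ofReal (exp (v * t ^ 2 / 2 * ∑ i, h (X i ω) ^ 2)) ∂P := by
  have hXv : Measurable fun ω i => X i ω := measurable_pi_lambda _ hX
  have hεv : Measurable fun ω i => ε i ω := measurable_pi_lambda _ hε
  have hinner : ∀ x : ι → S,
      ∫⁻ e, ENNReal.ofReal (exp (t * ∑ i, h (x i) * e i)) ∂P.map (fun ω i => ε i ω)
        = ENNReal.ofReal (exp (v * t ^ 2 / 2 * ∑ i, h (x i) ^ 2)) := fun x => by
    have hY : iIndepFun (fun i ω => t * h (x i) * ε i ω) P :=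
      hεind.comp (fun i e => t * h (x i) * e) fun _ => by fun_prop
    rw [lintegral_map (by fun_prop) hεv]
    calc ∫⁻ ω, ENNReal.ofReal (exp (t * ∑ i, h (x i) * ε i ω)) ∂P
        = ∫⁻ ω, ENNReal.ofReal (exp (∑ i, t * h (x i) * ε i ω)) ∂P := by
          simp_rw [Finset.mul_sum, mul_assoc]
      _ = ∏ i, ∫⁻ ω, ENNReal.ofReal (exp (t * h (x i) * ε i ω)) ∂P :=
          lintegral_exp_sum_of_iIndepFun (fun i => by fun_prop) hY
      _ = ∏ i, ENNReal.ofReal (exp (v * t ^ 2 / 2 * h (x i) ^ 2)) := by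
          refine Finset.prod_congr rfl fun i _ => ?_
          rw [← lintegral_map (f := fun e => ENNReal.ofReal (exp (t * h (x i) * e))) (by fun_prop)
            (hε i), hεlaw i, lintegral_exp_mul_gaussianReal]
          ring_nf
      _ = _ := by
          rw [← ENNReal.ofReal_prod_of_nonneg fun i _ => (exp_pos _).le, ← exp_sum, Finset.mul_sum]
  calc ∫⁻ ω, ENNReal.ofReal (exp (t * ∑ i, h (X i ω) * ε i ω)) ∂P
      = ∫⁻ p, ENNReal.ofReal (exp (t * ∑ i, h (p.1 i) * p.2 i))
          ∂(P.map (fun ω i => X i ω)).prod (P.map (fun ω i => ε i ω)) := by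
        rw [← (indepFun_iff_map_prod_eq_prod_map_map hXv.aemeasurable hεv.aemeasurable).1 hXε,
          lintegral_map (by fun_prop) (hXv.prodMk hεv)]
    _ = ∫⁻ x, ENNReal.ofReal (exp (v * t ^ 2 / 2 * ∑ i, h (x i) ^ 2))
          ∂P.map (fun ω i => X i ω) := by
        rw [lintegral_prod _ (by fun_prop)]
        simp_rw [hinner]
    _ = _ := lintegral_map (by fun_prop) hXv

lemma measure_sum_le_half_le (hX : ∀ i, Measurable (X i)) (hind : iIndepFun X P)
    (hlaw : ∀ i, P.map (X i) = G) (hf : Measurable f) (hB : 0 < B) (hf0 : ∀ x, 0 ≤ f x)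
    (hfB : ∀ x, f x ≤ B) :
    P {ω | ∑ i, f (X i ω) ≤ Fintype.card ι * (∫ x, f x ∂G) / 2}
      ≤ ENNReal.ofReal (exp (-(Fintype.card ι * ∫ x, f x ∂G) / (8 * B))) := by
  have hmgf := lintegral_exp_mul_sum_le_of_bounded hX hind hlaw hf hB hf0 hfB (-(1 / B))
  simp_rw [neg_mul (1 / B), ← mul_neg] at hmgf
  have hchern := measure_ge_le_of_lintegral_exp_le (Y := fun ω => -∑ i, f (X i ω))
    (by fun_prop) (by positivity) (-(Fintype.card ι * (∫ x, f x ∂G) / 2)) hmgf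
  simp_rw [neg_le_neg_iff] at hchern
  refine hchern.trans (ENNReal.ofReal_le_ofReal (exp_le_exp.2 ?_))
  set n : ℝ := (Fintype.card ι : ℝ)
  set μf := ∫ x, f x ∂G
  have hnμ : 0 ≤ n * μf / B :=
    div_nonneg (mul_nonneg (Nat.cast_nonneg _) (integral_nonneg hf0)) hB.le
  have hexp : exp (-1) < 3 / 8 := by
    rw [exp_neg, inv_lt_comm₀ (exp_pos 1) (by norm_num)]
    linarith [exp_one_gt_d9]
  have hB1 : 1 / B * -B = -1 := by field_simp
  rw [hB1]
  have : n * ((exp (-1) - 1) / B * μf) - 1 / B * -(n * μf / 2)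
      = n * μf / B * (exp (-1) - 1 / 2) := by field_simp; ring
  have : -(n * μf) / (8 * B) = n * μf / B * (-1 / 8) := by field_simp
  nlinarith

lemma measure_sum_ge_seven_quarters_le (hX : ∀ i, Measurable (X i)) (hind : iIndepFun X P)
    (hlaw : ∀ i, P.map (X i) = G) (hf : Measurable f) (hB : 0 < B) (hf0 : ∀ x, 0 ≤ f x)
    (hfB : ∀ x, f x ≤ B) :
    P {ω | 7 * Fintype.card ι * (∫ x, f x ∂G) / 4 ≤ ∑ i, f (X i ω)}
      ≤ ENNReal.ofReal (exp (-(Fintype.card ι * ∫ x, f x ∂G) / (32 * B))) := by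
  have hmgf := lintegral_exp_mul_sum_le_of_bounded hX hind hlaw hf hB hf0 hfB (1 / B)
  refine (measure_ge_le_of_lintegral_exp_le (by fun_prop) (by positivity) _ hmgf).trans
    (ENNReal.ofReal_le_ofReal (exp_le_exp.2 ?_))
  set n : ℝ := (Fintype.card ι : ℝ)
  set μf := ∫ x, f x ∂G
  have hnμ : 0 ≤ n * μf / B :=
    div_nonneg (mul_nonneg (Nat.cast_nonneg _) (integral_nonneg hf0)) hB.le
  have hexp : exp 1 < 87 / 32 := by linarith [exp_one_lt_d9]
  have hB1 : 1 / B * B = 1 := by field_simp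
  rw [hB1]
  have : n * ((exp 1 - 1) / B * μf) - 1 / B * (7 * n * μf / 4)
      = n * μf / B * (exp 1 - 11 / 4) := by field_simp; ring
  have : -(n * μf) / (32 * B) = n * μf / B * (-1 / 32) := by field_simp
  nlinarith

lemma measure_sum_mul_gaussian_ge_le [IsProbabilityMeasure P] (hX : ∀ i, Measurable (X i))
    (hind : iIndepFun X P) (hlaw : ∀ i, P.map (X i) = G) (hε : ∀ i, Measurable (ε i))
    (hεind : iIndepFun ε P) (hσ : 0 < σ)
    (hεlaw : ∀ i, P.map (ε i) = gaussianReal 0 (σ ^ 2).toNNReal)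
    (hXε : IndepFun (fun ω i => X i ω) (fun ω i => ε i ω) P) (hg : Measurable g) (hK : 0 < K)
    (hgK : ∀ x, |g x| ≤ K) :
    P {ω | Fintype.card ι * (∫ x, g x ^ 2 ∂G) / 8 ≤ ∑ i, g (X i ω) * ε i ω}
      ≤ ENNReal.ofReal (exp (-(Fintype.card ι * ∫ x, g x ^ 2 ∂G) /
          (16 * (16 * σ ^ 2 + σ * K)))) := by
  set n : ℝ := (Fintype.card ι : ℝ)
  set v := ∫ x, g x ^ 2 ∂G
  have hnv : 0 ≤ n * v := mul_nonneg (Nat.cast_nonneg _) (integral_nonneg fun x => sq_nonneg _)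
  set t := 1 / (16 * σ ^ 2 + σ * K)
  have ht : 0 < t := by positivity
  have htD : t * (16 * σ ^ 2 + σ * K) = 1 := by simp only [t]; field_simp
  have hσt : σ ^ 2 * t ≤ 1 / 16 := by nlinarith [mul_pos ht (mul_pos hσ hK)]
  have hσtK : σ * t * K ≤ 1 := by nlinarith [mul_pos ht (pow_pos hσ 2)]
  have hexp : (exp (σ ^ 2 * t ^ 2 / 2 * K ^ 2) - 1) / K ^ 2 ≤ σ ^ 2 * t ^ 2 := by
    have hx₀ : 0 ≤ σ ^ 2 * t ^ 2 / 2 * K ^ 2 := by positivity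
    have hx₁ : σ ^ 2 * t ^ 2 / 2 * K ^ 2 ≤ 1 := by nlinarith [mul_pos (mul_pos hσ ht) hK]
    have h := (abs_le.1 (abs_exp_sub_one_le (abs_le.2 ⟨by linarith, hx₁⟩))).2
    rw [abs_of_nonneg hx₀] at h
    rw [div_le_iff₀ (by positivity)]
    linarith
  have hg2 : ∀ x, g x ^ 2 ≤ K ^ 2 := fun x => sq_le_sq' (abs_le.1 (hgK x)).1 (abs_le.1 (hgK x)).2
  have hmgf : ∫⁻ ω, ENNReal.ofReal (exp (t * ∑ i, g (X i ω) * ε i ω)) ∂P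
      ≤ ENNReal.ofReal (exp (n * v * σ ^ 2 * t ^ 2)) := by
    rw [lintegral_exp_mul_sum_mul_gaussian hX hε hεind hεlaw hXε hg,
      Real.coe_toNNReal _ (sq_nonneg σ)]
    refine (lintegral_exp_mul_sum_le_of_bounded hX hind hlaw (hg.pow_const 2) (pow_pos hK 2)
      (fun _ => sq_nonneg _) hg2 _).trans (ENNReal.ofReal_le_ofReal (exp_le_exp.2 ?_))
    nlinarith [mul_le_mul_of_nonneg_left hexp hnv]
  refine (measure_ge_le_of_lintegral_exp_le (by fun_prop) ht.le _ hmgf).trans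
    (ENNReal.ofReal_le_ofReal (exp_le_exp.2 ?_))
  have : -(n * v) / (16 * (16 * σ ^ 2 + σ * K)) = -(t * (n * v) / 16) := by
    simp only [t]; field_simp
  rw [this]
  nlinarith [mul_le_mul_of_nonneg_left hσt (mul_nonneg ht.le hnv)]

lemma measure_abs_sum_mul_gaussian_ge_le [IsProbabilityMeasure P] (hX : ∀ i, Measurable (X i))
    (hind : iIndepFun X P) (hlaw : ∀ i, P.map (X i) = G) (hε : ∀ i, Measurable (ε i))
    (hεind : iIndepFun ε P) (hσ : 0 < σ)
    (hεlaw : ∀ i, P.map (ε i) = gaussianReal 0 (σ ^ 2).toNNReal)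
    (hXε : IndepFun (fun ω i => X i ω) (fun ω i => ε i ω) P) (hg : Measurable g) (hK : 0 < K)
    (hgK : ∀ x, |g x| ≤ K) :
    P {ω | Fintype.card ι * (∫ x, g x ^ 2 ∂G) / 8 ≤ |∑ i, g (X i ω) * ε i ω|}
      ≤ 2 * ENNReal.ofReal (exp (-(Fintype.card ι * ∫ x, g x ^ 2 ∂G) /
          (16 * (16 * σ ^ 2 + σ * K)))) := by
  have hpos := measure_sum_mul_gaussian_ge_le hX hind hlaw hε hεind hσ hεlaw hXε hg hK hgK
  have hneg := measure_sum_mul_gaussian_ge_le hX hind hlaw hε hεind hσ hεlaw hXε hg.neg hK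
    (g := -g) fun x => by simpa only [Pi.neg_apply, abs_neg] using hgK x
  simp only [Pi.neg_apply, neg_sq, neg_mul, Finset.sum_neg_distrib] at hneg
  calc P {ω | Fintype.card ι * (∫ x, g x ^ 2 ∂G) / 8 ≤ |∑ i, g (X i ω) * ε i ω|}
      ≤ P ({ω | Fintype.card ι * (∫ x, g x ^ 2 ∂G) / 8 ≤ ∑ i, g (X i ω) * ε i ω} ∪
          {ω | Fintype.card ι * (∫ x, g x ^ 2 ∂G) / 8 ≤ -∑ i, g (X i ω) * ε i ω}) :=
        measure_mono fun ω hω => by simpa only [Set.mem_union, Set.mem_ofPred_eq, le_abs] using hω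
    _ ≤ _ := (measure_union_le _ _).trans (by rw [two_mul]; exact add_le_add hpos hneg)

lemma measure_compl_mspe_sandwich_le [IsProbabilityMeasure P] (hι : 0 < Fintype.card ι)
    (hX : ∀ i, Measurable (X i)) (hind : iIndepFun X P)
    (hlaw : ∀ i, P.map (X i) = G) (hε : ∀ i, Measurable (ε i)) (hεind : iIndepFun ε P)
    (hσ : 0 < σ) (hεlaw : ∀ i, P.map (ε i) = gaussianReal 0 (σ ^ 2).toNNReal)
    (hXε : IndepFun (fun ω i => X i ω) (fun ω i => ε i ω) P) (hg : Measurable g)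
    (hK : 0 < K) (hgK : ∀ x, |g x| ≤ K) :
    P {ω | 1 / 4 * (∫ x, g x ^ 2 ∂G) + 1 / (Fintype.card ι : ℝ) * ∑ i, ε i ω ^ 2 ≤
          1 / (Fintype.card ι : ℝ) * ∑ i, (g (X i ω) - ε i ω) ^ 2 ∧
        1 / (Fintype.card ι : ℝ) * ∑ i, (g (X i ω) - ε i ω) ^ 2 ≤
          2 * (∫ x, g x ^ 2 ∂G) + 1 / (Fintype.card ι : ℝ) * ∑ i, ε i ω ^ 2}ᶜ
      ≤ 4 * ENNReal.ofReal (exp (-min (1 / (32 * K ^ 2)) (1 / (16 * (16 * σ ^ 2 + σ * K))) *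
          Fintype.card ι * ∫ x, g x ^ 2 ∂G)) := by
  have hg2 : ∀ x, g x ^ 2 ≤ K ^ 2 := fun x => sq_le_sq' (abs_le.1 (hgK x)).1 (abs_le.1 (hgK x)).2
  have hlow := measure_sum_le_half_le hX hind hlaw (hg.pow_const 2) (pow_pos hK 2)
    (fun _ => sq_nonneg _) hg2
  have hup := measure_sum_ge_seven_quarters_le hX hind hlaw (hg.pow_const 2) (pow_pos hK 2)
    (fun _ => sq_nonneg _) hg2
  have hcross := measure_abs_sum_mul_gaussian_ge_le hX hind hlaw hε hεind hσ hεlaw hXε hg hK hgK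
  set n : ℝ := (Fintype.card ι : ℝ)
  set v := ∫ x, g x ^ 2 ∂G
  set C := min (1 / (32 * K ^ 2)) (1 / (16 * (16 * σ ^ 2 + σ * K)))
  have hnv : 0 ≤ n * v := mul_nonneg (Nat.cast_nonneg _) (integral_nonneg fun x => sq_nonneg _)
  have hrate : ∀ {D : ℝ}, C ≤ 1 / D →
      ENNReal.ofReal (exp (-(n * v) / D)) ≤ ENNReal.ofReal (exp (-C * n * v)) := fun hC => by
    gcongr
    rw [neg_div, neg_mul, neg_mul, neg_le_neg_iff, mul_assoc, div_eq_mul_one_div, mul_comm (n * v)]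
    exact mul_le_mul_of_nonneg_right hC hnv
  have hC₁ : C ≤ 1 / (8 * K ^ 2) :=
    (min_le_left _ _).trans (one_div_le_one_div_of_le (by positivity) (by linarith [pow_pos hK 2]))
  have hC₂ : C ≤ 1 / (32 * K ^ 2) := min_le_left _ _
  have hC₃ : C ≤ 1 / (16 * (16 * σ ^ 2 + σ * K)) := min_le_right _ _
  calc P {ω | _}ᶜ
      ≤ P ({ω | ∑ i, g (X i ω) ^ 2 ≤ n * v / 2} ∪ {ω | 7 * n * v / 4 ≤ ∑ i, g (X i ω) ^ 2} ∪
          {ω | n * v / 8 ≤ |∑ i, g (X i ω) * ε i ω|}) := by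
        refine measure_mono fun ω hω => ?_
        by_contra hgood
        simp only [Set.mem_union, Set.mem_ofPred_eq, not_or, not_le] at hgood
        exact hω (sum_sq_sub_sandwich_of_bounds (by positivity) _ _ hgood.1.1 hgood.1.2 hgood.2)
    _ ≤ _ := (measure_union_le _ _).trans (add_le_add_left (measure_union_le _ _) _)
    _ ≤ ENNReal.ofReal (exp (-C * n * v)) + ENNReal.ofReal (exp (-C * n * v)) +
          2 * ENNReal.ofReal (exp (-C * n * v)) := by
        gcongr
        · exact hlow.trans (hrate hC₁)
        · exact hup.trans (hrate hC₂)
        · exact hcross.trans (mul_le_mul_right (hrate hC₃) 2)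
    _ = 4 * ENNReal.ofReal (exp (-C * n * v)) := by ring

end IIDSample

/-- Key cross-validation inequality: for every `A > 0` and `σ > 0` there is `C > 0`,
depending only on `A` and `σ`, such that for any `g` bounded by `2A` with
`‖g‖₂² = ∫ g² dG > 0`, an i.i.d. sample `X₁,…,X_m` from `G`, and i.i.d. `N(0,σ²)` noise
`ε₁,…,ε_m` independent of the sample, the mean squared prediction error
`(1/m)Σ (g(Xᵢ) - εᵢ)²` is sandwiched between `‖g‖₂²/4` and `2‖g‖₂²`, up to the common
additive term `(1/m)Σ εᵢ²`, with probability at least `1 - 8 exp(-C m ‖g‖₂²)`. -/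
theorem mspe_sandwich (A σ : ℝ) (hA : 0 < A) (hσ : 0 < σ) :
    ∃ C : ℝ, 0 < C ∧
      ∀ (Ω : Type) [MeasurableSpace Ω] (P : Measure Ω) [IsProbabilityMeasure P]
        (S : Type) [MeasurableSpace S] (G : Measure S) [IsProbabilityMeasure G]
        (g : S → ℝ), Measurable g → (∀ x, |g x| ≤ 2 * A) →
        0 < ∫ x, (g x) ^ 2 ∂G →
      ∀ (m : ℕ), 1 ≤ m →
      ∀ (X : Fin m → Ω → S), (∀ i, Measurable (X i)) →
        iIndepFun X P →
        (∀ i, Measure.map (X i) P = G) →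
      ∀ (ε : Fin m → Ω → ℝ), (∀ i, Measurable (ε i)) →
        iIndepFun ε P →
        (∀ i, Measure.map (ε i) P = gaussianReal 0 (Real.toNNReal (σ ^ 2))) →
        IndepFun (fun ω (i : Fin m) => X i ω) (fun ω (i : Fin m) => ε i ω) P →
        1 - ENNReal.ofReal (8 * Real.exp (-C * m * ∫ x, (g x) ^ 2 ∂G)) ≤
          P {ω |
            (1 / 4) * (∫ x, (g x) ^ 2 ∂G) + (1 / m) * ∑ i, (ε i ω) ^ 2 ≤
              (1 / m) * ∑ i, (g (X i ω) - ε i ω) ^ 2 ∧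
            (1 / m) * ∑ i, (g (X i ω) - ε i ω) ^ 2 ≤
              2 * (∫ x, (g x) ^ 2 ∂G) + (1 / m) * ∑ i, (ε i ω) ^ 2} := by
  refine ⟨min (1 / (32 * (2 * A) ^ 2)) (1 / (16 * (16 * σ ^ 2 + σ * (2 * A)))), by positivity, ?_⟩
  intro Ω _ P _ S _ G _ g hg hgA _ m hm X hX hXind hXlaw ε hε hεind hεlaw hXε
  have hbad := measure_compl_mspe_sandwich_le (by rwa [Fintype.card_fin]) hX hXind hXlaw hε hεind
    hσ hεlaw hXε hg (by positivity) hgA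
  simp only [Fintype.card_fin] at hbad
  rw [tsub_le_iff_right]
  calc 1 = P Set.univ := measure_univ.symm
    _ ≤ P {ω | _} + P {ω | _}ᶜ := measure_univ_le_add_compl _
    _ ≤ _ := by
        gcongr
        refine hbad.trans ?_
        rw [ENNReal.ofReal_mul (by norm_num)]
        gcongr
        norm_num
end
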